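/- Suppose there exist C¹ functions A, B : ℝ⁵ → ℂ such that [L̄, T] f = A·(T f) + B·(S f) for every smooth f : ℝ⁵ → ℂ. Let R := [L, S] and define the conjugate operator R̄ by R̄ f := conj( R( conj f ) ). Then for every smooth f: R̄ f = ( L̄(A) + B·L(A) + A² )·(T f) + ( L̄(B) + B·L(B) + 2·A·B )·(S f) + B²·(R f). (This is the paper's Preparatory Lemma expressing R̄ for General Class III₂.) -/

import Mathlib

noncomputable section
open Complex ComplexConjugate

/-- Points of `ℝ⁵`, with coordinates `(x, y, u₁, u₂, u₃)` and `z = x + i y`. -/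
abbrev V5 := Fin 5 → ℝ

/-- Partial derivative in the `j`-th coordinate direction. -/
def pd (j : Fin 5) (f : V5 → ℂ) : V5 → ℂ := fun p => fderiv ℝ f p (Pi.single j 1)

/-- Wirtinger derivative `f_z := (f_x − i f_y)/2`. -/
def wz (f : V5 → ℂ) : V5 → ℂ := fun p => (pd 0 f p - I * pd 1 f p) / 2

/-- Wirtinger derivative `f_z̄ := (f_x + i f_y)/2`. -/
def wzb (f : V5 → ℂ) : V5 → ℂ := fun p => (pd 0 f p + I * pd 1 f p) / 2

variable (a₁ a₂ a₃ : V5 → ℂ)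

/-- The operator `L f := f_z + a₁ f_{u₁} + a₂ f_{u₂} + a₃ f_{u₃}`. -/
def Lop (f : V5 → ℂ) : V5 → ℂ := fun p =>
  wz f p + a₁ p * pd 2 f p + a₂ p * pd 3 f p + a₃ p * pd 4 f p

/-- The operator `L̄ f := f_z̄ + ā₁ f_{u₁} + ā₂ f_{u₂} + ā₃ f_{u₃}`. -/
def Lbop (f : V5 → ℂ) : V5 → ℂ := fun p =>
  wzb f p + conj (a₁ p) * pd 2 f p + conj (a₂ p) * pd 3 f p + conj (a₃ p) * pd 4 f p

/-- The operator `T := i·[L, L̄]`. -/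
def Tof (f : V5 → ℂ) : V5 → ℂ := fun p =>
  I * (Lop a₁ a₂ a₃ (Lbop a₁ a₂ a₃ f) p - Lbop a₁ a₂ a₃ (Lop a₁ a₂ a₃ f) p)

/-- The operator `S := [L, T]`. -/
def Sof (f : V5 → ℂ) : V5 → ℂ := fun p =>
  Lop a₁ a₂ a₃ (Tof a₁ a₂ a₃ f) p - Tof a₁ a₂ a₃ (Lop a₁ a₂ a₃ f) p

/-- The operator `S̄ := [L̄, T]`. -/
def Sbof (f : V5 → ℂ) : V5 → ℂ := fun p =>
  Lbop a₁ a₂ a₃ (Tof a₁ a₂ a₃ f) p - Tof a₁ a₂ a₃ (Lbop a₁ a₂ a₃ f) p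

/-- The operator `R := [L, S]`. -/
def Rof (f : V5 → ℂ) : V5 → ℂ := fun p =>
  Lop a₁ a₂ a₃ (Sof a₁ a₂ a₃ f) p - Sof a₁ a₂ a₃ (Lop a₁ a₂ a₃ f) p

/-- The conjugate operator `R̄ f := conj (R (conj f))`. -/
def Rbof (f : V5 → ℂ) : V5 → ℂ := fun p =>
  conj (Rof a₁ a₂ a₃ (fun q => conj (f q)) p)

/-!
`L` and `L̄` are first-order operators, hence derivations, and conjugation exchanges them while
fixing `T`; so `S(f̄) = conj (S̄ f)` and `R̄ = [L̄, S̄]`. Applying `L̄` to `S̄ f = A·T f + B·S f` by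
the Leibniz rule gives `[L̄, S̄] = L̄(A)·T + A·[L̄, T] + L̄(B)·S + B·[L̄, S]`. By the Jacobi
identity `[L̄, S] = [L, S̄] + [[L̄, L], T]`, where `[[L̄, L], T] = i·[T, T] = 0` and, again by Leibniz,
`[L, S̄] = L(A)·T + A·S + L(B)·S + B·R`. Substituting everything gives the formula.
-/

open scoped ContDiff

section FirstOrderOp

variable {E ι : Type*} [NormedAddCommGroup E] [NormedSpace ℝ E] [Fintype ι]
  (v : ι → E) (c : ι → E → ℂ) {g h : E → ℂ} {p : E}

def firstOrderOp (f : E → ℂ) : E → ℂ := fun p => ∑ i, c i p * fderiv ℝ f p (v i)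

lemma firstOrderOp_add (hg : DifferentiableAt ℝ g p) (hh : DifferentiableAt ℝ h p) :
    firstOrderOp v c (fun q => g q + h q) p = firstOrderOp v c g p + firstOrderOp v c h p := by
  simp only [firstOrderOp, fderiv_fun_add hg hh, add_apply, mul_add, Finset.sum_add_distrib]

lemma firstOrderOp_sub (hg : DifferentiableAt ℝ g p) (hh : DifferentiableAt ℝ h p) :
    firstOrderOp v c (fun q => g q - h q) p = firstOrderOp v c g p - firstOrderOp v c h p := by
  simp only [firstOrderOp, fderiv_fun_sub hg hh, sub_apply, mul_sub, Finset.sum_sub_distrib]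

lemma firstOrderOp_const_mul (a : ℂ) (hg : DifferentiableAt ℝ g p) :
    firstOrderOp v c (fun q => a * g q) p = a * firstOrderOp v c g p := by
  simp only [firstOrderOp, fderiv_const_mul hg, smul_apply, smul_eq_mul, Finset.mul_sum]
  exact Finset.sum_congr rfl fun i _ => by ring

lemma firstOrderOp_mul (hg : DifferentiableAt ℝ g p) (hh : DifferentiableAt ℝ h p) :
    firstOrderOp v c (fun q => g q * h q) p
      = firstOrderOp v c g p * h p + g p * firstOrderOp v c h p := by
  simp only [firstOrderOp, fderiv_fun_mul hg hh, add_apply, smul_apply, smul_eq_mul,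
    Finset.sum_mul, Finset.mul_sum, ← Finset.sum_add_distrib]
  exact Finset.sum_congr rfl fun i _ => by ring

lemma firstOrderOp_conj (g : E → ℂ) (p : E) :
    firstOrderOp v c (fun q => conj (g q)) p
      = conj (firstOrderOp v (fun i q => conj (c i q)) g p) := by
  have hconj : (fun q => conj (g q)) = (conjCLE : ℂ ≃L[ℝ] ℂ) ∘ g := rfl
  simp only [firstOrderOp, hconj, ContinuousLinearEquiv.comp_fderiv, map_sum, map_mul,
    conj_conj]
  rfl

lemma contDiff_firstOrderOp {n m : WithTop ℕ∞} {f : E → ℂ} (hc : ∀ i, ContDiff ℝ n (c i))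
    (hf : ContDiff ℝ m f) (hnm : n + 1 ≤ m) : ContDiff ℝ n (firstOrderOp v c f) :=
  ContDiff.sum fun i _ => (hc i).mul ((hf.fderiv_right hnm).clm_apply contDiff_const)

end FirstOrderOp

/-- `L = ½ ∂ₓ - (i/2) ∂_y + a₁ ∂_{u₁} + a₂ ∂_{u₂} + a₃ ∂_{u₃}`. -/
def Lcoeff : Fin 5 → V5 → ℂ := ![fun _ => 1 / 2, fun _ => -I / 2, a₁, a₂, a₃]

lemma Lop_eq_firstOrderOp :
    Lop a₁ a₂ a₃ = firstOrderOp (fun j => Pi.single j 1) (Lcoeff a₁ a₂ a₃) := by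
  funext f p
  simp only [Lop, wz, pd, firstOrderOp, Fin.sum_univ_five, Lcoeff, Matrix.cons_val]
  ring

lemma Lbop_eq_firstOrderOp :
    Lbop a₁ a₂ a₃
      = firstOrderOp (fun j => Pi.single j 1) (fun j q => conj (Lcoeff a₁ a₂ a₃ j q)) := by
  funext f p
  simp only [Lbop, wzb, pd, firstOrderOp, Fin.sum_univ_five, Lcoeff, Matrix.cons_val, map_div₀,
    map_one, map_neg, map_ofNat, conj_I, neg_neg]
  ring

section Operators

variable {a₁ a₂ a₃} {g h : V5 → ℂ} {p : V5}

lemma Lop_add (hg : DifferentiableAt ℝ g p) (hh : DifferentiableAt ℝ h p) :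
    Lop a₁ a₂ a₃ (fun q => g q + h q) p = Lop a₁ a₂ a₃ g p + Lop a₁ a₂ a₃ h p := by
  rw [Lop_eq_firstOrderOp]; exact firstOrderOp_add _ _ hg hh

lemma Lbop_add (hg : DifferentiableAt ℝ g p) (hh : DifferentiableAt ℝ h p) :
    Lbop a₁ a₂ a₃ (fun q => g q + h q) p = Lbop a₁ a₂ a₃ g p + Lbop a₁ a₂ a₃ h p := by
  rw [Lbop_eq_firstOrderOp]; exact firstOrderOp_add _ _ hg hh

lemma Lop_sub (hg : DifferentiableAt ℝ g p) (hh : DifferentiableAt ℝ h p) :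
    Lop a₁ a₂ a₃ (fun q => g q - h q) p = Lop a₁ a₂ a₃ g p - Lop a₁ a₂ a₃ h p := by
  rw [Lop_eq_firstOrderOp]; exact firstOrderOp_sub _ _ hg hh

lemma Lbop_sub (hg : DifferentiableAt ℝ g p) (hh : DifferentiableAt ℝ h p) :
    Lbop a₁ a₂ a₃ (fun q => g q - h q) p = Lbop a₁ a₂ a₃ g p - Lbop a₁ a₂ a₃ h p := by
  rw [Lbop_eq_firstOrderOp]; exact firstOrderOp_sub _ _ hg hh

lemma Lop_const_mul (c : ℂ) (hg : DifferentiableAt ℝ g p) :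
    Lop a₁ a₂ a₃ (fun q => c * g q) p = c * Lop a₁ a₂ a₃ g p := by
  rw [Lop_eq_firstOrderOp]; exact firstOrderOp_const_mul _ _ c hg

lemma Lbop_const_mul (c : ℂ) (hg : DifferentiableAt ℝ g p) :
    Lbop a₁ a₂ a₃ (fun q => c * g q) p = c * Lbop a₁ a₂ a₃ g p := by
  rw [Lbop_eq_firstOrderOp]; exact firstOrderOp_const_mul _ _ c hg

lemma Lop_mul (hg : DifferentiableAt ℝ g p) (hh : DifferentiableAt ℝ h p) :
    Lop a₁ a₂ a₃ (fun q => g q * h q) p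
      = Lop a₁ a₂ a₃ g p * h p + g p * Lop a₁ a₂ a₃ h p := by
  rw [Lop_eq_firstOrderOp]; exact firstOrderOp_mul _ _ hg hh

lemma Lbop_mul (hg : DifferentiableAt ℝ g p) (hh : DifferentiableAt ℝ h p) :
    Lbop a₁ a₂ a₃ (fun q => g q * h q) p
      = Lbop a₁ a₂ a₃ g p * h p + g p * Lbop a₁ a₂ a₃ h p := by
  rw [Lbop_eq_firstOrderOp]; exact firstOrderOp_mul _ _ hg hh

lemma Lop_conj (g : V5 → ℂ) :
    Lop a₁ a₂ a₃ (fun q => conj (g q)) = fun q => conj (Lbop a₁ a₂ a₃ g q) := by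
  funext q
  rw [Lop_eq_firstOrderOp, Lbop_eq_firstOrderOp, firstOrderOp_conj]

lemma Lbop_conj (g : V5 → ℂ) :
    Lbop a₁ a₂ a₃ (fun q => conj (g q)) = fun q => conj (Lop a₁ a₂ a₃ g q) := by
  funext q
  simp only [Lop_eq_firstOrderOp, Lbop_eq_firstOrderOp, firstOrderOp_conj, conj_conj]

lemma Tof_conj (g : V5 → ℂ) :
    Tof a₁ a₂ a₃ (fun q => conj (g q)) = fun q => conj (Tof a₁ a₂ a₃ g q) := by
  funext q
  simp only [Tof, Lop_conj, Lbop_conj, map_mul, map_sub, conj_I]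
  ring

lemma Sof_conj (g : V5 → ℂ) :
    Sof a₁ a₂ a₃ (fun q => conj (g q)) = fun q => conj (Sbof a₁ a₂ a₃ g q) := by
  funext q
  simp only [Sof, Sbof, Tof_conj, Lop_conj, map_sub]

lemma Rbof_eq_Lbop_Sbof_sub (f : V5 → ℂ) (p : V5) :
    Rbof a₁ a₂ a₃ f p
      = Lbop a₁ a₂ a₃ (Sbof a₁ a₂ a₃ f) p - Sbof a₁ a₂ a₃ (Lbop a₁ a₂ a₃ f) p := by
  simp only [Rbof, Rof, Sof_conj, Lop_conj, map_sub, conj_conj]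

lemma Lbop_Lop (g : V5 → ℂ) (p : V5) :
    Lbop a₁ a₂ a₃ (Lop a₁ a₂ a₃ g) p
      = Lop a₁ a₂ a₃ (Lbop a₁ a₂ a₃ g) p + I * Tof a₁ a₂ a₃ g p := by
  simp only [Tof]
  linear_combination (Lbop a₁ a₂ a₃ (Lop a₁ a₂ a₃ g) p
    - Lop a₁ a₂ a₃ (Lbop a₁ a₂ a₃ g) p) * I_sq

lemma contDiff_Lcoeff (ha₁ : ContDiff ℝ ∞ a₁) (ha₂ : ContDiff ℝ ∞ a₂) (ha₃ : ContDiff ℝ ∞ a₃)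
    (j : Fin 5) : ContDiff ℝ ∞ (Lcoeff a₁ a₂ a₃ j) := by
  fin_cases j <;> simp [Lcoeff, contDiff_const, *]

section Smooth

variable (ha : ∀ j, ContDiff ℝ ∞ (Lcoeff a₁ a₂ a₃ j))
include ha

lemma contDiff_Lop (hg : ContDiff ℝ ∞ g) : ContDiff ℝ ∞ (Lop a₁ a₂ a₃ g) := by
  rw [Lop_eq_firstOrderOp]
  exact contDiff_firstOrderOp _ _ ha hg (by simp)

lemma contDiff_Lbop (hg : ContDiff ℝ ∞ g) : ContDiff ℝ ∞ (Lbop a₁ a₂ a₃ g) := by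
  rw [Lbop_eq_firstOrderOp]
  exact contDiff_firstOrderOp _ _ (fun j => (conjCLE : ℂ ≃L[ℝ] ℂ).contDiff.comp (ha j)) hg
    (by simp)

lemma contDiff_Tof (hg : ContDiff ℝ ∞ g) : ContDiff ℝ ∞ (Tof a₁ a₂ a₃ g) :=
  contDiff_const.mul <|
    (contDiff_Lop ha (contDiff_Lbop ha hg)).sub (contDiff_Lbop ha (contDiff_Lop ha hg))

lemma contDiff_Sof (hg : ContDiff ℝ ∞ g) : ContDiff ℝ ∞ (Sof a₁ a₂ a₃ g) :=
  (contDiff_Lop ha (contDiff_Tof ha hg)).sub (contDiff_Tof ha (contDiff_Lop ha hg))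

lemma Tof_add (hg : ContDiff ℝ ∞ g) (hh : ContDiff ℝ ∞ h) (p : V5) :
    Tof a₁ a₂ a₃ (fun q => g q + h q) p = Tof a₁ a₂ a₃ g p + Tof a₁ a₂ a₃ h p := by
  have hL : Lop a₁ a₂ a₃ (fun q => g q + h q) = fun q => Lop a₁ a₂ a₃ g q + Lop a₁ a₂ a₃ h q :=
    funext fun q => Lop_add (hg.differentiable (by simp) q) (hh.differentiable (by simp) q)
  have hLb : Lbop a₁ a₂ a₃ (fun q => g q + h q)
      = fun q => Lbop a₁ a₂ a₃ g q + Lbop a₁ a₂ a₃ h q :=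
    funext fun q => Lbop_add (hg.differentiable (by simp) q) (hh.differentiable (by simp) q)
  simp only [Tof, hL, hLb]
  rw [Lop_add ((contDiff_Lbop ha hg).differentiable (by simp) p)
      ((contDiff_Lbop ha hh).differentiable (by simp) p),
    Lbop_add ((contDiff_Lop ha hg).differentiable (by simp) p)
      ((contDiff_Lop ha hh).differentiable (by simp) p)]
  ring

lemma Tof_const_mul (c : ℂ) (hg : ContDiff ℝ ∞ g) (p : V5) :
    Tof a₁ a₂ a₃ (fun q => c * g q) p = c * Tof a₁ a₂ a₃ g p := by
  have hL : Lop a₁ a₂ a₃ (fun q => c * g q) = fun q => c * Lop a₁ a₂ a₃ g q :=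
    funext fun q => Lop_const_mul c (hg.differentiable (by simp) q)
  have hLb : Lbop a₁ a₂ a₃ (fun q => c * g q) = fun q => c * Lbop a₁ a₂ a₃ g q :=
    funext fun q => Lbop_const_mul c (hg.differentiable (by simp) q)
  simp only [Tof, hL, hLb]
  rw [Lop_const_mul c ((contDiff_Lbop ha hg).differentiable (by simp) p),
    Lbop_const_mul c ((contDiff_Lop ha hg).differentiable (by simp) p)]
  ring

lemma Tof_Lbop_Lop {f : V5 → ℂ} (hf : ContDiff ℝ ∞ f) (p : V5) :
    Tof a₁ a₂ a₃ (Lbop a₁ a₂ a₃ (Lop a₁ a₂ a₃ f)) p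
      = Tof a₁ a₂ a₃ (Lop a₁ a₂ a₃ (Lbop a₁ a₂ a₃ f)) p + I * Tof a₁ a₂ a₃ (Tof a₁ a₂ a₃ f) p := by
  rw [funext (Lbop_Lop f), Tof_add ha (contDiff_Lop ha (contDiff_Lbop ha hf))
    (contDiff_const.mul (contDiff_Tof ha hf)), Tof_const_mul ha I (contDiff_Tof ha hf)]

end Smooth

section ClassIII₂

variable {A B : V5 → ℂ} (ha : ∀ j, ContDiff ℝ ∞ (Lcoeff a₁ a₂ a₃ j))
  (hA : Differentiable ℝ A) (hB : Differentiable ℝ B)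
  (hAB : ∀ f : V5 → ℂ, ContDiff ℝ ∞ f → ∀ p,
    Sbof a₁ a₂ a₃ f p = A p * Tof a₁ a₂ a₃ f p + B p * Sof a₁ a₂ a₃ f p)
include ha hA hB hAB

lemma Lop_Sbof {f : V5 → ℂ} (hf : ContDiff ℝ ∞ f) (p : V5) :
    Lop a₁ a₂ a₃ (Sbof a₁ a₂ a₃ f) p
      = Lop a₁ a₂ a₃ A p * Tof a₁ a₂ a₃ f p + A p * Lop a₁ a₂ a₃ (Tof a₁ a₂ a₃ f) p
        + (Lop a₁ a₂ a₃ B p * Sof a₁ a₂ a₃ f p + B p * Lop a₁ a₂ a₃ (Sof a₁ a₂ a₃ f) p) := by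
  have hT := (contDiff_Tof ha hf).differentiable (by simp) p
  have hS := (contDiff_Sof ha hf).differentiable (by simp) p
  rw [funext (hAB f hf), Lop_add ((hA p).fun_mul hT) ((hB p).fun_mul hS), Lop_mul (hA p) hT,
    Lop_mul (hB p) hS]

lemma Lbop_Sbof {f : V5 → ℂ} (hf : ContDiff ℝ ∞ f) (p : V5) :
    Lbop a₁ a₂ a₃ (Sbof a₁ a₂ a₃ f) p
      = Lbop a₁ a₂ a₃ A p * Tof a₁ a₂ a₃ f p + A p * Lbop a₁ a₂ a₃ (Tof a₁ a₂ a₃ f) p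
        + (Lbop a₁ a₂ a₃ B p * Sof a₁ a₂ a₃ f p + B p * Lbop a₁ a₂ a₃ (Sof a₁ a₂ a₃ f) p) := by
  have hT := (contDiff_Tof ha hf).differentiable (by simp) p
  have hS := (contDiff_Sof ha hf).differentiable (by simp) p
  rw [funext (hAB f hf), Lbop_add ((hA p).fun_mul hT) ((hB p).fun_mul hS), Lbop_mul (hA p) hT,
    Lbop_mul (hB p) hS]

/-- Jacobi: `[L̄, [L, T]] = [L, [L̄, T]] + [[L̄, L], T]`, and `[[L̄, L], T] = i·[T, T] = 0`. -/
lemma Lbop_Sof {f : V5 → ℂ} (hf : ContDiff ℝ ∞ f) (p : V5) :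
    Lbop a₁ a₂ a₃ (Sof a₁ a₂ a₃ f) p
      = Sof a₁ a₂ a₃ (Lbop a₁ a₂ a₃ f) p + Lop a₁ a₂ a₃ A p * Tof a₁ a₂ a₃ f p
        + Lop a₁ a₂ a₃ B p * Sof a₁ a₂ a₃ f p + A p * Sof a₁ a₂ a₃ f p
        + B p * Rof a₁ a₂ a₃ f p := by
  have hLf := contDiff_Lop ha hf
  have hTf := contDiff_Tof ha hf
  have hLbf := contDiff_Lbop ha hf
  have hLbS : Lbop a₁ a₂ a₃ (Sof a₁ a₂ a₃ f) p
      = Lbop a₁ a₂ a₃ (Lop a₁ a₂ a₃ (Tof a₁ a₂ a₃ f)) p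
        - Lbop a₁ a₂ a₃ (Tof a₁ a₂ a₃ (Lop a₁ a₂ a₃ f)) p :=
    Lbop_sub ((contDiff_Lop ha hTf).differentiable (by simp) p)
      ((contDiff_Tof ha hLf).differentiable (by simp) p)
  have hLSb : Lop a₁ a₂ a₃ (Sbof a₁ a₂ a₃ f) p
      = Lop a₁ a₂ a₃ (Lbop a₁ a₂ a₃ (Tof a₁ a₂ a₃ f)) p
        - Lop a₁ a₂ a₃ (Tof a₁ a₂ a₃ (Lbop a₁ a₂ a₃ f)) p :=
    Lop_sub ((contDiff_Lbop ha hTf).differentiable (by simp) p)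
      ((contDiff_Tof ha hLbf).differentiable (by simp) p)
  have hSbL : Sbof a₁ a₂ a₃ (Lop a₁ a₂ a₃ f) p
      = A p * Tof a₁ a₂ a₃ (Lop a₁ a₂ a₃ f) p + B p * Sof a₁ a₂ a₃ (Lop a₁ a₂ a₃ f) p :=
    hAB _ hLf p
  have hSLb : Sof a₁ a₂ a₃ (Lbop a₁ a₂ a₃ f) p
      = Lop a₁ a₂ a₃ (Tof a₁ a₂ a₃ (Lbop a₁ a₂ a₃ f)) p
        - Tof a₁ a₂ a₃ (Lop a₁ a₂ a₃ (Lbop a₁ a₂ a₃ f)) p := rfl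
  have hS : Sof a₁ a₂ a₃ f p
      = Lop a₁ a₂ a₃ (Tof a₁ a₂ a₃ f) p - Tof a₁ a₂ a₃ (Lop a₁ a₂ a₃ f) p := rfl
  have hSbL' : Sbof a₁ a₂ a₃ (Lop a₁ a₂ a₃ f) p
      = Lbop a₁ a₂ a₃ (Tof a₁ a₂ a₃ (Lop a₁ a₂ a₃ f)) p
        - Tof a₁ a₂ a₃ (Lbop a₁ a₂ a₃ (Lop a₁ a₂ a₃ f)) p := rfl
  have hR : Rof a₁ a₂ a₃ f p
      = Lop a₁ a₂ a₃ (Sof a₁ a₂ a₃ f) p - Sof a₁ a₂ a₃ (Lop a₁ a₂ a₃ f) p := rfl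
  linear_combination hLbS + Lbop_Lop (Tof a₁ a₂ a₃ f) p - hLSb + Lop_Sbof ha hA hB hAB hf p
    + hSbL' - hSbL - Tof_Lbop_Lop ha hf p - hSLb - A p * hS - B p * hR

end ClassIII₂

end Operators

/-- The paper's Preparatory Lemma for General Class III₂: if `[L̄, T] = A·T + B·S` with
`A, B` of class `C¹`, then
`R̄ = (L̄(A) + B·L(A) + A²)·T + (L̄(B) + B·L(B) + 2AB)·S + B²·R`. -/
theorem class_III₂_preparatory_lemma
    (ha₁ : ContDiff ℝ (⊤ : ℕ∞) a₁) (ha₂ : ContDiff ℝ (⊤ : ℕ∞) a₂)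
    (ha₃ : ContDiff ℝ (⊤ : ℕ∞) a₃) (A B : V5 → ℂ)
    (hA : ContDiff ℝ 1 A) (hB : ContDiff ℝ 1 B)
    (hAB : ∀ f : V5 → ℂ, ContDiff ℝ (⊤ : ℕ∞) f → ∀ p,
        Lbop a₁ a₂ a₃ (Tof a₁ a₂ a₃ f) p - Tof a₁ a₂ a₃ (Lbop a₁ a₂ a₃ f) p
          = A p * Tof a₁ a₂ a₃ f p + B p * Sof a₁ a₂ a₃ f p) :
    ∀ f : V5 → ℂ, ContDiff ℝ (⊤ : ℕ∞) f → ∀ p,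
      Rbof a₁ a₂ a₃ f p
        = (Lbop a₁ a₂ a₃ A p + B p * Lop a₁ a₂ a₃ A p + A p ^ 2) * Tof a₁ a₂ a₃ f p
          + (Lbop a₁ a₂ a₃ B p + B p * Lop a₁ a₂ a₃ B p + 2 * A p * B p)
              * Sof a₁ a₂ a₃ f p
          + B p ^ 2 * Rof a₁ a₂ a₃ f p := by
  intro f hf p
  have ha := contDiff_Lcoeff ha₁ ha₂ ha₃
  have hA' := hA.differentiable one_ne_zero
  have hB' := hB.differentiable one_ne_zero
  have hAB' : ∀ g : V5 → ℂ, ContDiff ℝ ∞ g → ∀ q,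
      Sbof a₁ a₂ a₃ g q = A q * Tof a₁ a₂ a₃ g q + B q * Sof a₁ a₂ a₃ g q := hAB
  linear_combination Rbof_eq_Lbop_Sbof_sub f p + Lbop_Sbof ha hA' hB' hAB' hf p + A p * hAB f hf p
    + B p * Lbop_Sof ha hA' hB' hAB' hf p - hAB' _ (contDiff_Lbop ha hf) p

end
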